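/- Let Ω ⊆ ℝⁿ be an open set and F : Ω → ℝ a C^∞ function whose Hessian D²F(x) is a nondegenerate symmetric bilinear form at every x ∈ Ω. Suppose that for every x ∈ Ω and all vectors u,v,w,z ∈ ℝⁿ one has D⁴F(x)(u,v,w,z) = (1/2)[ D³F(x)(u,v,B_x(w,z)) + D³F(x)(u,w,B_x(v,z)) + D³F(x)(u,z,B_x(v,w)) ], where B_x(w,z) ∈ ℝⁿ is the unique vector satisfying D²F(x)(B_x(w,z), ·) = D³F(x)(w,z,·). Then for every y ∈ Ω the difference-tensor algebra of F at y is a real Jordan algebra (its multiplication is commutative and satisfies the Jordan identity x∙(x²∙y) = x²∙(x∙y)), and γ = D²F(y) is a nondegenerate trace form on it, so the pair is a metrised Jordan algebra. -/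

import Mathlib

set_option linter.unusedSectionVars false
set_option maxHeartbeats 1000000

open Set Filter

section Aux
variable {E : Type*} [NormedAddCommGroup E] [NormedSpace ℝ E]
variable {G : Type*} [NormedAddCommGroup G] [NormedSpace ℝ G]

lemma iFD_add_two_apply (f : E → G) (y : E) {k : ℕ} (m : Fin k → E) (a b : E) :
    iteratedFDeriv ℝ (k+2) f y (Fin.cons a (Fin.cons b m)) =
      fderiv ℝ (fderiv ℝ (iteratedFDeriv ℝ k f)) y a b m := by
  have h := LinearIsometryEquiv.comp_fderiv
    (𝕜 := ℝ) (continuousMultilinearCurryLeftEquiv ℝ (fun _ : Fin (k+1) => E) G).symm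
    (f := fderiv ℝ (iteratedFDeriv ℝ k f)) (x := y)
  rw [iteratedFDeriv_succ_apply_left]
  simp only [Fin.cons_zero, Fin.tail_cons]
  rw [iteratedFDeriv_succ_eq_comp_left, h]
  rfl

lemma iFD_swap01 {f : E → G} {y : E} (hf : ContDiffAt ℝ (⊤ : ℕ∞) f y) {k : ℕ}
    (m : Fin k → E) (a b : E) :
    iteratedFDeriv ℝ (k+2) f y (Fin.cons a (Fin.cons b m)) =
      iteratedFDeriv ℝ (k+2) f y (Fin.cons b (Fin.cons a m)) := by
  rw [iFD_add_two_apply, iFD_add_two_apply]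
  have hg : ContDiffAt ℝ 2 (iteratedFDeriv ℝ k f) y := by
    apply hf.iteratedFDeriv_right
    exact_mod_cast ENat.natCast_le_of_coe_top_le_withTop le_rfl (2 + k)
  rw [(hg.isSymmSndFDerivAt (by simp)).eq a b]

lemma hasFDerivAt_iFD_apply {f : E → G} {y : E} (hf : ContDiffAt ℝ (⊤ : ℕ∞) f y) {k : ℕ}
    (m : Fin k → E) :
    HasFDerivAt (fun p => iteratedFDeriv ℝ k f p m)
      ((fderiv ℝ (iteratedFDeriv ℝ k f) y).flipMultilinear m) y := by
  have hd : DifferentiableAt ℝ (iteratedFDeriv ℝ k f) y := by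
    have : ContDiffAt ℝ 1 (iteratedFDeriv ℝ k f) y := by
      apply hf.iteratedFDeriv_right
      exact_mod_cast ENat.natCast_le_of_coe_top_le_withTop le_rfl (1 + k)
    exact this.differentiableAt one_ne_zero
  exact hd.hasFDerivAt.continuousMultilinear_apply_const m

lemma fderiv_iFD_eval {f : E → G} {y : E} {k : ℕ} (m : Fin k → E) (t : E) :
    (fderiv ℝ (iteratedFDeriv ℝ k f) y t) m = iteratedFDeriv ℝ (k+1) f y (Fin.cons t m) := by
  rw [iteratedFDeriv_succ_apply_left]
  simp only [Fin.cons_zero, Fin.tail_cons]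

lemma upd2_0 (a b x : E) : Function.update ![a, b] 0 x = ![x, b] := by
  funext i; fin_cases i <;> simp
lemma upd2_1 (a b x : E) : Function.update ![a, b] 1 x = ![a, x] := by
  funext i; fin_cases i <;> simp
lemma upd3_0 (a b c x : E) : Function.update ![a, b, c] 0 x = ![x, b, c] := by
  funext i; fin_cases i <;> simp
lemma upd3_1 (a b c x : E) : Function.update ![a, b, c] 1 x = ![a, x, c] := by
  funext i; fin_cases i <;> simp
lemma upd3_2 (a b c x : E) : Function.update ![a, b, c] 2 x = ![a, b, x] := by
  funext i; fin_cases i <;> simp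

section ML
variable (M : ContinuousMultilinearMap ℝ (fun _ : Fin 2 => E) ℝ)
variable (N : ContinuousMultilinearMap ℝ (fun _ : Fin 3 => E) ℝ)

lemma M2_add0 (u u' v : E) : M ![u + u', v] = M ![u, v] + M ![u', v] := by
  simpa [upd2_0] using M.map_update_add ![u, v] 0 u u'
lemma M2_smul0 (c : ℝ) (u v : E) : M ![c • u, v] = c * M ![u, v] := by
  simpa [upd2_0] using M.map_update_smul ![u, v] 0 c u
lemma M2_sub0 (u u' v : E) : M ![u - u', v] = M ![u, v] - M ![u', v] := by
  have h := M2_add0 M u (-u') v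
  have h2 : M ![-u', v] = -M ![u', v] := by
    simpa [upd2_0] using M.map_update_smul ![u', v] 0 (-1 : ℝ) u'
  rw [sub_eq_add_neg, sub_eq_add_neg, ← h2, ← h]
lemma M2_add1 (u v v' : E) : M ![u, v + v'] = M ![u, v] + M ![u, v'] := by
  simpa [upd2_1] using M.map_update_add ![u, v] 1 v v'
lemma M2_smul1 (c : ℝ) (u v : E) : M ![u, c • v] = c * M ![u, v] := by
  simpa [upd2_1] using M.map_update_smul ![u, v] 1 c v

lemma M3_add0 (u u' v w : E) : N ![u + u', v, w] = N ![u, v, w] + N ![u', v, w] := by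
  simpa [upd3_0] using N.map_update_add ![u, v, w] 0 u u'
lemma M3_smul0 (c : ℝ) (u v w : E) : N ![c • u, v, w] = c * N ![u, v, w] := by
  simpa [upd3_0] using N.map_update_smul ![u, v, w] 0 c u
lemma M3_add1 (u v v' w : E) : N ![u, v + v', w] = N ![u, v, w] + N ![u, v', w] := by
  simpa [upd3_1] using N.map_update_add ![u, v, w] 1 v v'
lemma M3_smul1 (c : ℝ) (u v w : E) : N ![u, c • v, w] = c * N ![u, v, w] := by
  simpa [upd3_1] using N.map_update_smul ![u, v, w] 1 c v
lemma M3_add2 (u v w w' : E) : N ![u, v, w + w'] = N ![u, v, w] + N ![u, v, w'] := by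
  simpa [upd3_2] using N.map_update_add ![u, v, w] 2 w w'
lemma M3_smul2 (c : ℝ) (u v w : E) : N ![u, v, c • w] = c * N ![u, v, w] := by
  simpa [upd3_2] using N.map_update_smul ![u, v, w] 2 c w

end ML

lemma bb3 (u a : E) : IsBoundedBilinearMap ℝ
    (fun q : (ContinuousMultilinearMap ℝ (fun _ : Fin 3 => E) ℝ) × E => q.1 ![u, a, q.2]) := by
  refine ⟨fun M M' b => rfl, fun c M b => rfl, fun M b b' => M3_add2 M u a b b',
    fun c M b => M3_smul2 M c u a b, ⟨‖u‖ * ‖a‖ + 1, by positivity, fun M b => ?_⟩⟩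
  have h := M.le_opNorm ![u, a, b]
  have h2 : (∏ i, ‖(![u, a, b]) i‖) = ‖u‖ * ‖a‖ * ‖b‖ := by
    rw [Fin.prod_univ_three]; simp
  rw [h2] at h
  have hM : (0:ℝ) ≤ ‖M‖ := norm_nonneg _
  have hb : (0:ℝ) ≤ ‖b‖ := norm_nonneg _
  nlinarith [norm_nonneg u, norm_nonneg a]

lemma bb2 (s : E) : IsBoundedBilinearMap ℝ
    (fun q : (ContinuousMultilinearMap ℝ (fun _ : Fin 2 => E) ℝ) × E => q.1 ![q.2, s]) := by
  refine ⟨fun M M' b => rfl, fun c M b => rfl, fun M b b' => M2_add0 M b b' s,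
    fun c M b => M2_smul0 M c b s, ⟨‖s‖ + 1, by positivity, fun M b => ?_⟩⟩
  have h := M.le_opNorm ![b, s]
  have h2 : (∏ i, ‖(![b, s]) i‖) = ‖b‖ * ‖s‖ := by
    rw [Fin.prod_univ_two]; simp
  rw [h2] at h
  have hM : (0:ℝ) ≤ ‖M‖ := norm_nonneg _
  have hb : (0:ℝ) ≤ ‖b‖ := norm_nonneg _
  nlinarith [norm_nonneg s]

lemma init3_eq (a b c : E) : Fin.init ![a, b, c] = ![a, b] := by
  funext i; fin_cases i <;> rfl

lemma exists_cle [FiniteDimensional ℝ E] (A : E →L[ℝ] (E →L[ℝ] ℝ))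
    (h : ∀ u, (∀ v, A u v = 0) → u = 0) :
    ∃ e : E ≃L[ℝ] (E →L[ℝ] ℝ), (e : E →L[ℝ] (E →L[ℝ] ℝ)) = A := by
  have hinj : Function.Injective (A : E →ₗ[ℝ] (E →L[ℝ] ℝ)) := by
    intro u u' huu
    have : u - u' = 0 := by
      apply h
      intro v
      have hs : A (u - u') = A u - A u' := by rw [map_sub]
      rw [hs]
      simp only [ContinuousLinearMap.sub_apply]
      have : A u = A u' := huu
      rw [this]; ring
    exact sub_eq_zero.mp this
  have h1 : Module.finrank ℝ (E →ₗ[ℝ] ℝ) = Module.finrank ℝ (E →L[ℝ] ℝ) :=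
    (LinearMap.toContinuousLinearMap (𝕜 := ℝ) (E := E) (F' := ℝ)).finrank_eq
  have hdim : Module.finrank ℝ E = Module.finrank ℝ (E →L[ℝ] ℝ) := by
    rw [← h1]
    exact (Subspace.dual_finrank_eq (K := ℝ) (V := E)).symm
  let le := LinearMap.linearEquivOfInjective (A : E →ₗ[ℝ] (E →L[ℝ] ℝ)) hinj hdim
  refine ⟨le.toContinuousLinearEquiv, ?_⟩
  apply ContinuousLinearMap.ext
  intro v
  show le.toContinuousLinearEquiv v = A v
  rw [LinearEquiv.coe_toContinuousLinearEquiv']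
  exact LinearMap.linearEquivOfInjective_apply _ hdim v

end Aux

lemma flip_eval {E : Type*} [NormedAddCommGroup E] [NormedSpace ℝ E]
    {G : Type*} [NormedAddCommGroup G] [NormedSpace ℝ G]
    {f : E → G} {y : E} {k : ℕ} (m : Fin k → E) (t : E) :
    ((fderiv ℝ (iteratedFDeriv ℝ k f) y).flipMultilinear m) t
      = iteratedFDeriv ℝ (k+1) f y (Fin.cons t m) := fderiv_iFD_eval m t

/-- Second iterated (Fréchet) derivative of `F` within `Ω` at `x`, as a bilinear form. -/
noncomputable def D2 {n : ℕ} (F : EuclideanSpace ℝ (Fin n) → ℝ)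
    (Ω : Set (EuclideanSpace ℝ (Fin n))) (x u v : EuclideanSpace ℝ (Fin n)) : ℝ :=
  iteratedFDerivWithin ℝ 2 F Ω x ![u, v]

/-- Third iterated (Fréchet) derivative of `F` within `Ω` at `x`, as a trilinear form. -/
noncomputable def D3 {n : ℕ} (F : EuclideanSpace ℝ (Fin n) → ℝ)
    (Ω : Set (EuclideanSpace ℝ (Fin n))) (x u v w : EuclideanSpace ℝ (Fin n)) : ℝ :=
  iteratedFDerivWithin ℝ 3 F Ω x ![u, v, w]

/-- Fourth iterated (Fréchet) derivative of `F` within `Ω` at `x`. -/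
noncomputable def D4 {n : ℕ} (F : EuclideanSpace ℝ (Fin n) → ℝ)
    (Ω : Set (EuclideanSpace ℝ (Fin n))) (x u v w z : EuclideanSpace ℝ (Fin n)) : ℝ :=
  iteratedFDerivWithin ℝ 4 F Ω x ![u, v, w, z]

/-- for a smooth `F` on an open `Ω ⊆ ℝⁿ` with everywhere nondegenerate Hessian,
satisfying the quasi-linear fourth-order PDE
`D⁴F(x)(u,v,w,z) = (1/2)[D³F(x)(u,v,B_x(w,z)) + D³F(x)(u,w,B_x(v,z)) + D³F(x)(u,z,B_x(v,w))]`
(where `B_x` is determined by `D²F(x)(B_x(w,z),·) = D³F(x)(w,z,·)`), the difference-tensor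
algebra of `F` at every `y ∈ Ω` (the multiplication `mul` determined by
`D²F(y)(mul u v, w) = -(1/2) D³F(y)(u,v,w)`) is a real Jordan algebra, and `γ = D²F(y)` is a
nondegenerate trace form on it, i.e. `(J,γ)` is a metrised Jordan algebra. -/
theorem stmt_0 {n : ℕ} (Ω : Set (EuclideanSpace ℝ (Fin n))) (hΩ : IsOpen Ω)
    (F : EuclideanSpace ℝ (Fin n) → ℝ) (hF : ContDiffOn ℝ (⊤ : ℕ∞) F Ω)
    (hnd : ∀ x ∈ Ω, ∀ u, (∀ v, D2 F Ω x u v = 0) → u = 0)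
    (B : EuclideanSpace ℝ (Fin n) → EuclideanSpace ℝ (Fin n) → EuclideanSpace ℝ (Fin n) →
      EuclideanSpace ℝ (Fin n))
    (hB : ∀ x ∈ Ω, ∀ w z v, D2 F Ω x (B x w z) v = D3 F Ω x w z v)
    (hPDE : ∀ x ∈ Ω, ∀ u v w z,
      D4 F Ω x u v w z =
        (1/2) * (D3 F Ω x u v (B x w z) + D3 F Ω x u w (B x v z) + D3 F Ω x u z (B x v w)))
    (y : EuclideanSpace ℝ (Fin n)) (hy : y ∈ Ω)
    (mul : EuclideanSpace ℝ (Fin n) → EuclideanSpace ℝ (Fin n) → EuclideanSpace ℝ (Fin n))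
    (hmul : ∀ u v w, D2 F Ω y (mul u v) w = -(1/2) * D3 F Ω y u v w) :
    (∀ u v, mul u v = mul v u) ∧
    (∀ u u' v, mul (u + u') v = mul u v + mul u' v) ∧
    (∀ (c : ℝ) u v, mul (c • u) v = c • mul u v) ∧
    (∀ x z, mul x (mul (mul x x) z) = mul (mul x x) (mul x z)) ∧
    (∀ u v, D2 F Ω y u v = D2 F Ω y v u) ∧
    (∀ u v w, D2 F Ω y (mul u v) w = D2 F Ω y u (mul v w)) ∧
    (∀ u, (∀ v, D2 F Ω y u v = 0) → u = 0) := by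
  classical
  -- basic conversions
  have hFat : ∀ x ∈ Ω, ContDiffAt ℝ (⊤ : ℕ∞) F x := fun x hx =>
    ((hF.contDiffAt (hΩ.mem_nhds hx)).of_le (by simp))
  have hFy := hFat y hy
  have c2 : ∀ x ∈ Ω, ∀ u v, D2 F Ω x u v = iteratedFDeriv ℝ 2 F x ![u, v] := fun x hx u v => by
    unfold D2; rw [iteratedFDerivWithin_of_isOpen 2 hΩ hx]
  have c3 : ∀ x ∈ Ω, ∀ u v w, D3 F Ω x u v w = iteratedFDeriv ℝ 3 F x ![u, v, w] :=
    fun x hx u v w => by unfold D3; rw [iteratedFDerivWithin_of_isOpen 3 hΩ hx]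
  have c4 : ∀ x ∈ Ω, ∀ u v w z, D4 F Ω x u v w z = iteratedFDeriv ℝ 4 F x ![u, v, w, z] :=
    fun x hx u v w z => by unfold D4; rw [iteratedFDerivWithin_of_isOpen 4 hΩ hx]
  -- symmetry of the second derivative, at every point of Ω
  have S2 : ∀ x ∈ Ω, ∀ u v, iteratedFDeriv ℝ 2 F x ![u, v] = iteratedFDeriv ℝ 2 F x ![v, u] :=
    fun x hx u v => iFD_swap01 (hFat x hx) (k := 0) ![] u v
  have S2w : ∀ u v, D2 F Ω y u v = D2 F Ω y v u := fun u v => by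
    rw [c2 y hy, c2 y hy, S2 y hy]
  -- nondegeneracy, reformulated
  have ndg := hnd y hy
  have eqg : ∀ X Y, (∀ s, D2 F Ω y X s = D2 F Ω y Y s) → X = Y := by
    intro X Y hXY
    have h0 : ∀ s, D2 F Ω y (X - Y) s = 0 := by
      intro s
      rw [c2 y hy, M2_sub0, ← c2 y hy, ← c2 y hy, hXY]; ring
    exact sub_eq_zero.mp (ndg (X - Y) h0)
  -- linearity of D2 and D3 at y in the needed slots
  have hD2add : ∀ X Y s, D2 F Ω y (X + Y) s = D2 F Ω y X s + D2 F Ω y Y s := fun X Y s => by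
    rw [c2 y hy, c2 y hy, c2 y hy, M2_add0]
  have hD2smul : ∀ (c : ℝ) X s, D2 F Ω y (c • X) s = c * D2 F Ω y X s := fun c X s => by
    rw [c2 y hy, c2 y hy, M2_smul0]
  have hD3add0 : ∀ u u' v s, D3 F Ω y (u + u') v s = D3 F Ω y u v s + D3 F Ω y u' v s :=
    fun u u' v s => by rw [c3 y hy, c3 y hy, c3 y hy, M3_add0]
  have hD3smul0 : ∀ (c : ℝ) u v s, D3 F Ω y (c • u) v s = c * D3 F Ω y u v s :=
    fun c u v s => by rw [c3 y hy, c3 y hy, M3_smul0]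
  -- symmetry of the third derivative at y
  have Tsw01 : ∀ u v w, D3 F Ω y u v w = D3 F Ω y v u w := fun u v w => by
    rw [c3 y hy, c3 y hy]
    exact iFD_swap01 hFy (k := 1) ![w] u v
  have Tsw12 : ∀ u v w, D3 F Ω y u v w = D3 F Ω y u w v := by
    intro u v w
    have h1 := hasFDerivAt_iFD_apply hFy (k := 2) ![v, w]
    have h2 := hasFDerivAt_iFD_apply hFy (k := 2) ![w, v]
    have heq : (fun p => iteratedFDeriv ℝ 2 F p ![v, w])
        =ᶠ[nhds y] (fun p => iteratedFDeriv ℝ 2 F p ![w, v]) := by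
      filter_upwards [hΩ.mem_nhds hy] with x hx
      exact S2 x hx v w
    have hU := h1.unique (h2.congr_of_eventuallyEq heq)
    rw [c3 y hy, c3 y hy]
    calc iteratedFDeriv ℝ 3 F y ![u, v, w]
        = ((fderiv ℝ (iteratedFDeriv ℝ 2 F) y).flipMultilinear ![v, w]) u :=
          (flip_eval ![v, w] u).symm
      _ = ((fderiv ℝ (iteratedFDeriv ℝ 2 F) y).flipMultilinear ![w, v]) u := by rw [hU]
      _ = iteratedFDeriv ℝ 3 F y ![u, w, v] := flip_eval ![w, v] u
  have Tcyc : ∀ u v w, D3 F Ω y v w u = D3 F Ω y u v w := fun u v w => by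
    rw [Tsw01 v w u, Tsw12 w v u, Tsw01 w u v, Tsw12 u w v]
  -- first conclusions
  have hcomm : ∀ u v, mul u v = mul v u := fun u v =>
    eqg _ _ fun s => by rw [hmul, hmul, Tsw01]
  have hadd : ∀ u u' v, mul (u + u') v = mul u v + mul u' v := fun u u' v =>
    eqg _ _ fun s => by rw [hmul, hD3add0, hD2add, hmul, hmul]; ring
  have hsmul : ∀ (c : ℝ) u v, mul (c • u) v = c • mul u v := fun c u v =>
    eqg _ _ fun s => by rw [hmul, hD3smul0, hD2smul, hmul]; ring
  have htrace : ∀ u v w, D2 F Ω y (mul u v) w = D2 F Ω y u (mul v w) := fun u v w => by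
    rw [hmul, S2w, hmul, Tcyc u v w]
  -- B-algebra at y
  have hBy : ∀ u v s, D2 F Ω y (B y u v) s = D3 F Ω y u v s := hB y hy
  have hBcomm : ∀ u v, B y u v = B y v u := fun u v =>
    eqg _ _ fun s => by rw [hBy, hBy, Tsw01]
  have hBsm0 : ∀ (c : ℝ) u v, B y (c • u) v = c • B y u v := fun c u v =>
    eqg _ _ fun s => by rw [hBy, hD3smul0, hD2smul, hBy]
  have hBsm1 : ∀ (c : ℝ) u v, B y u (c • v) = c • B y u v := fun c u v => by
    rw [hBcomm, hBsm0, hBcomm]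
  have hmB : ∀ u v, mul u v = (-(1/2) : ℝ) • B y u v := fun u v =>
    eqg _ _ fun s => by rw [hmul, hD2smul, hBy]
  -- THE ANALYTIC CORE: the master identity
  have master : ∀ a t u,
      D2 F Ω y (B y t a) (B y u (B y a a)) = D2 F Ω y (B y u a) (B y t (B y a a)) := by
    intro a
    -- curried second and third derivatives
    have hH2 : ∀ p (b c : EuclideanSpace ℝ (Fin n)),
        iteratedFDeriv ℝ 2 F p ![b, c] = fderiv ℝ (fderiv ℝ F) p b c := by
      intro p b c
      rw [iteratedFDeriv_two_apply]
      simp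
    have hT3g : ∀ p (b c d : EuclideanSpace ℝ (Fin n)),
        iteratedFDeriv ℝ 3 F p ![b, c, d] = fderiv ℝ (fderiv ℝ (fderiv ℝ F)) p b c d := by
      intro p b c d
      rw [iteratedFDeriv_succ_apply_right, init3_eq, iteratedFDeriv_two_apply]
      rfl
    -- invertibility of the Hessian at points of Ω
    have hcle : ∀ p ∈ Ω, ∃ e : EuclideanSpace ℝ (Fin n) ≃L[ℝ]
        (EuclideanSpace ℝ (Fin n) →L[ℝ] ℝ),
        (e : EuclideanSpace ℝ (Fin n) →L[ℝ] (EuclideanSpace ℝ (Fin n) →L[ℝ] ℝ))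
          = fderiv ℝ (fderiv ℝ F) p := by
      intro p hp
      apply exists_cle
      intro X hX
      apply hnd p hp X
      intro v
      rw [c2 p hp, hH2]
      exact hX v
    -- the auxiliary smooth vector field β
    set β : EuclideanSpace ℝ (Fin n) → EuclideanSpace ℝ (Fin n) := fun p =>
      (ContinuousLinearMap.inverse (fderiv ℝ (fderiv ℝ F) p))
        (fderiv ℝ (fderiv ℝ (fderiv ℝ F)) p a a) with hβdef
    have hβB : ∀ p ∈ Ω, β p = B p a a := by
      intro p hp
      obtain ⟨e, he⟩ := hcle p hp
      have hinv : ContinuousLinearMap.inverse (fderiv ℝ (fderiv ℝ F) p)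
          = (e.symm : (EuclideanSpace ℝ (Fin n) →L[ℝ] ℝ) →L[ℝ] EuclideanSpace ℝ (Fin n)) := by
        rw [← he]; exact ContinuousLinearMap.inverse_equiv e
      have hHB : fderiv ℝ (fderiv ℝ F) p (B p a a)
          = fderiv ℝ (fderiv ℝ (fderiv ℝ F)) p a a := by
        apply ContinuousLinearMap.ext; intro s
        rw [← hH2, ← c2 p hp, hB p hp, c3 p hp, hT3g]
      show (ContinuousLinearMap.inverse (fderiv ℝ (fderiv ℝ F) p))
        (fderiv ℝ (fderiv ℝ (fderiv ℝ F)) p a a) = B p a a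
      rw [hinv, ← hHB, ← he]
      simp
    -- smoothness side conditions
    have topp : ((⊤ : ℕ∞) : WithTop ℕ∞) + 1 ≤ ((⊤ : ℕ∞) : WithTop ℕ∞) := by
      exact_mod_cast (by simp : (⊤ : ℕ∞) + 1 ≤ (⊤ : ℕ∞))
    have hHc : ContDiffAt ℝ (⊤ : ℕ∞) (fderiv ℝ (fderiv ℝ F)) y :=
      (hFy.fderiv_right topp).fderiv_right topp
    have hTc := hHc.fderiv_right topp
    have hβd : DifferentiableAt ℝ β y := by
      obtain ⟨ey, hey⟩ := hcle y hy
      have h1 : ContDiffAt ℝ (⊤ : ℕ∞) (ContinuousLinearMap.inverse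
          (R := ℝ) (M := EuclideanSpace ℝ (Fin n))
          (M₂ := EuclideanSpace ℝ (Fin n) →L[ℝ] ℝ)) (fderiv ℝ (fderiv ℝ F) y) := by
        rw [← hey]; exact contDiffAt_map_inverse ey
      have hIc : ContDiffAt ℝ (⊤ : ℕ∞)
          (fun p => ContinuousLinearMap.inverse (fderiv ℝ (fderiv ℝ F) p)) y := h1.comp y hHc
      have hcy : ContDiffAt ℝ (⊤ : ℕ∞)
          (fun p => fderiv ℝ (fderiv ℝ (fderiv ℝ F)) p a a) y :=
        (hTc.clm_apply contDiffAt_const).clm_apply contDiffAt_const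
      have hβc : ContDiffAt ℝ (⊤ : ℕ∞) β y := hIc.clm_apply hcy
      exact hβc.differentiableAt
        (by simp)
    -- differentiability of the iterated derivatives, as maps into multilinear spaces
    have dΦ2 : HasFDerivAt (iteratedFDeriv ℝ 2 F) (fderiv ℝ (iteratedFDeriv ℝ 2 F) y) y := by
      have : ContDiffAt ℝ 1 (iteratedFDeriv ℝ 2 F) y := hFy.iteratedFDeriv_right
        (by exact_mod_cast ENat.natCast_le_of_coe_top_le_withTop le_rfl (1+2))
      exact (this.differentiableAt one_ne_zero).hasFDerivAt
    have dΦ3 : HasFDerivAt (iteratedFDeriv ℝ 3 F) (fderiv ℝ (iteratedFDeriv ℝ 3 F) y) y := by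
      have : ContDiffAt ℝ 1 (iteratedFDeriv ℝ 3 F) y := hFy.iteratedFDeriv_right
        (by exact_mod_cast ENat.natCast_le_of_coe_top_le_withTop le_rfl (1+3))
      exact (this.differentiableAt one_ne_zero).hasFDerivAt
    -- the derivative of x ↦ γ_x(β x, s)
    have starβ : ∀ t s, iteratedFDeriv ℝ 2 F y ![fderiv ℝ β y t, s]
        = iteratedFDeriv ℝ 4 F y ![t, a, a, s] - iteratedFDeriv ℝ 3 F y ![t, β y, s] := by
      intro t s
      have h₄ := hasFDerivAt_iFD_apply hFy (k := 3) ![a, a, s]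
      have h₃ : HasFDerivAt (fun p => iteratedFDeriv ℝ 2 F p ![β p, s])
          (((bb2 s).deriv (iteratedFDeriv ℝ 2 F y, β y)).comp
            ((fderiv ℝ (iteratedFDeriv ℝ 2 F) y).prod (fderiv ℝ β y))) y :=
        by have := ((bb2 s).hasFDerivAt (iteratedFDeriv ℝ 2 F y, β y)).comp y (HasFDerivAt.prodMk dΦ2 hβd.hasFDerivAt); exact this
      have heq : (fun p => iteratedFDeriv ℝ 2 F p ![β p, s])
          =ᶠ[nhds y] (fun p => iteratedFDeriv ℝ 3 F p ![a, a, s]) := by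
        filter_upwards [hΩ.mem_nhds hy] with x hx
        rw [hβB x hx, ← c2 x hx, hB x hx, c3 x hx]
      have hU := (h₄.congr_of_eventuallyEq heq).unique h₃
      have lhs_eval : ((fderiv ℝ (iteratedFDeriv ℝ 3 F) y).flipMultilinear ![a, a, s]) t
          = iteratedFDeriv ℝ 4 F y ![t, a, a, s] := flip_eval ![a, a, s] t
      have rhs_eval : (((bb2 s).deriv (iteratedFDeriv ℝ 2 F y, β y)).comp
            ((fderiv ℝ (iteratedFDeriv ℝ 2 F) y).prod (fderiv ℝ β y))) t
          = iteratedFDeriv ℝ 2 F y ![fderiv ℝ β y t, s]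
            + iteratedFDeriv ℝ 3 F y ![t, β y, s] := by
        have e1 : (((bb2 s).deriv (iteratedFDeriv ℝ 2 F y, β y)).comp
            ((fderiv ℝ (iteratedFDeriv ℝ 2 F) y).prod (fderiv ℝ β y))) t
            = (bb2 s).deriv (iteratedFDeriv ℝ 2 F y, β y)
                (fderiv ℝ (iteratedFDeriv ℝ 2 F) y t, fderiv ℝ β y t) := rfl
        rw [e1, (bb2 s).deriv_apply]
        have e2 : (fderiv ℝ (iteratedFDeriv ℝ 2 F) y t) ![β y, s]
            = iteratedFDeriv ℝ 3 F y ![t, β y, s] := fderiv_iFD_eval ![β y, s] t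
        rw [e2]
      have := congrArg (fun (L : _ →L[ℝ] ℝ) => L t) hU
      simp only at this
      rw [lhs_eval, rhs_eval] at this
      linarith
    -- the derivative of x ↦ D³F(x)(u', a, β x), and the PDE
    have star2 : ∀ u' t, iteratedFDeriv ℝ 5 F y ![t, u', a, a, a]
        = (3/2) * (iteratedFDeriv ℝ 3 F y ![u', a, fderiv ℝ β y t]
            + iteratedFDeriv ℝ 4 F y ![t, u', a, β y]) := by
      intro u' t
      have h₁ := hasFDerivAt_iFD_apply hFy (k := 4) ![u', a, a, a]
      have hφ : HasFDerivAt (fun p => iteratedFDeriv ℝ 3 F p ![u', a, β p])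
          (((bb3 u' a).deriv (iteratedFDeriv ℝ 3 F y, β y)).comp
            ((fderiv ℝ (iteratedFDeriv ℝ 3 F) y).prod (fderiv ℝ β y))) y :=
        by have := ((bb3 u' a).hasFDerivAt (iteratedFDeriv ℝ 3 F y, β y)).comp y (HasFDerivAt.prodMk dΦ3 hβd.hasFDerivAt); exact this
      have h₂ := hφ.const_mul (3/2 : ℝ)
      have heq : (fun p => iteratedFDeriv ℝ 4 F p ![u', a, a, a])
          =ᶠ[nhds y] (fun p => (3/2 : ℝ) * iteratedFDeriv ℝ 3 F p ![u', a, β p]) := by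
        filter_upwards [hΩ.mem_nhds hy] with x hx
        rw [hβB x hx, ← c4 x hx, ← c3 x hx, hPDE x hx u' a a a]
        ring
      have hU := (h₂.congr_of_eventuallyEq heq).unique h₁
      have lhs_eval : ((fderiv ℝ (iteratedFDeriv ℝ 4 F) y).flipMultilinear ![u', a, a, a]) t
          = iteratedFDeriv ℝ 5 F y ![t, u', a, a, a] := flip_eval ![u', a, a, a] t
      have rhs_eval : (((bb3 u' a).deriv (iteratedFDeriv ℝ 3 F y, β y)).comp
            ((fderiv ℝ (iteratedFDeriv ℝ 3 F) y).prod (fderiv ℝ β y))) t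
          = iteratedFDeriv ℝ 3 F y ![u', a, fderiv ℝ β y t]
            + iteratedFDeriv ℝ 4 F y ![t, u', a, β y] := by
        have e1 : (((bb3 u' a).deriv (iteratedFDeriv ℝ 3 F y, β y)).comp
            ((fderiv ℝ (iteratedFDeriv ℝ 3 F) y).prod (fderiv ℝ β y))) t
            = (bb3 u' a).deriv (iteratedFDeriv ℝ 3 F y, β y)
                (fderiv ℝ (iteratedFDeriv ℝ 3 F) y t, fderiv ℝ β y t) := rfl
        rw [e1, (bb3 u' a).deriv_apply]
        have e2 : (fderiv ℝ (iteratedFDeriv ℝ 3 F) y t) ![u', a, β y]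
            = iteratedFDeriv ℝ 4 F y ![t, u', a, β y] := fderiv_iFD_eval ![u', a, β y] t
        rw [e2]
      have := congrArg (fun (L : _ →L[ℝ] ℝ) => L t) hU
      simp only at this
      rw [lhs_eval] at this
      rw [ContinuousLinearMap.smul_apply, rhs_eval] at this
      rw [← this, smul_eq_mul]
    -- translate into the within-language identity
    have βy : β y = B y a a := hβB y hy
    have key : ∀ u' t, iteratedFDeriv ℝ 5 F y ![t, u', a, a, a]
        = (3/2) * (D4 F Ω y t a a (B y u' a) - D3 F Ω y t (B y a a) (B y u' a)
            + D4 F Ω y t u' a (B y a a)) := by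
      intro u' t
      have e1 : iteratedFDeriv ℝ 3 F y ![u', a, fderiv ℝ β y t]
          = D4 F Ω y t a a (B y u' a) - D3 F Ω y t (B y a a) (B y u' a) := by
        have e0 : iteratedFDeriv ℝ 3 F y ![u', a, fderiv ℝ β y t]
            = D2 F Ω y (fderiv ℝ β y t) (B y u' a) := by
          rw [← c3 y hy, ← hBy, S2w]
        rw [e0, c2 y hy, starβ t (B y u' a), ← c4 y hy, ← c3 y hy, βy]
      have e2 : iteratedFDeriv ℝ 4 F y ![t, u', a, β y] = D4 F Ω y t u' a (B y a a) := by
        rw [βy, ← c4 y hy]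
      rw [star2 u' t, e1, e2]
    -- swap the first two slots of the fifth derivative
    have swap5 : ∀ t u', iteratedFDeriv ℝ 5 F y ![t, u', a, a, a]
        = iteratedFDeriv ℝ 5 F y ![u', t, a, a, a] := fun t u' =>
      iFD_swap01 hFy (k := 3) ![a, a, a] t u'
    -- final algebra
    intro t u
    have Seq : D4 F Ω y t a a (B y u a) - D3 F Ω y t (B y a a) (B y u a)
          + D4 F Ω y t u a (B y a a)
        = D4 F Ω y u a a (B y t a) - D3 F Ω y u (B y a a) (B y t a)
          + D4 F Ω y u t a (B y a a) := by
      have h1 := key u t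
      have h2 := key t u
      rw [swap5 t u] at h1
      rw [h1] at h2
      linarith
    have P1 := hPDE y hy t u a (B y a a)
    have P2 := hPDE y hy u t a (B y a a)
    have P3 := hPDE y hy t a a (B y u a)
    have P4 := hPDE y hy u a a (B y t a)
    have G1 : D3 F Ω y t u (B y a (B y a a)) = D3 F Ω y u t (B y a (B y a a)) := Tsw01 t u _
    have G2 : D3 F Ω y t (B y a a) (B y u a) = D3 F Ω y t (B y u a) (B y a a) := Tsw12 t _ _
    have G2' : D3 F Ω y u (B y a a) (B y t a) = D3 F Ω y u (B y t a) (B y a a) := Tsw12 u _ _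
    have G3 : D3 F Ω y t a (B y a (B y u a)) = D3 F Ω y u a (B y a (B y t a)) := by
      calc D3 F Ω y t a (B y a (B y u a))
          = D2 F Ω y (B y t a) (B y a (B y u a)) := (hBy _ _ _).symm
        _ = D2 F Ω y (B y a (B y u a)) (B y t a) := S2w _ _
        _ = D3 F Ω y a (B y u a) (B y t a) := hBy _ _ _
        _ = D3 F Ω y a (B y t a) (B y u a) := Tsw12 a _ _
        _ = D2 F Ω y (B y a (B y t a)) (B y u a) := (hBy _ _ _).symm
        _ = D2 F Ω y (B y u a) (B y a (B y t a)) := S2w _ _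
        _ = D3 F Ω y u a (B y a (B y t a)) := hBy _ _ _
    have goal3 : D3 F Ω y t a (B y u (B y a a)) = D3 F Ω y u a (B y t (B y a a)) := by
      linarith
    rw [hBy, hBy]
    exact goal3
  -- Jordan identity for B
  have hBJordan : ∀ a z,
      B y a (B y (B y a a) z) = B y (B y a a) (B y a z) := by
    intro a z
    apply eqg
    intro s
    calc D2 F Ω y (B y a (B y (B y a a) z)) s
        = D3 F Ω y a (B y (B y a a) z) s := hBy _ _ _
      _ = D3 F Ω y s a (B y (B y a a) z) := Tcyc s a _
      _ = D3 F Ω y s a (B y z (B y a a)) := by rw [hBcomm (B y a a) z]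
      _ = D2 F Ω y (B y s a) (B y z (B y a a)) := (hBy _ _ _).symm
      _ = D2 F Ω y (B y z a) (B y s (B y a a)) := master a s z
      _ = D3 F Ω y z a (B y s (B y a a)) := hBy _ _ _
      _ = D3 F Ω y a z (B y s (B y a a)) := (Tsw01 a z _).symm
      _ = D2 F Ω y (B y a z) (B y s (B y a a)) := (hBy _ _ _).symm
      _ = D2 F Ω y (B y s (B y a a)) (B y a z) := S2w _ _
      _ = D3 F Ω y s (B y a a) (B y a z) := hBy _ _ _
      _ = D3 F Ω y (B y a a) (B y a z) s := (Tcyc s (B y a a) _).symm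
      _ = D2 F Ω y (B y (B y a a) (B y a z)) s := (hBy _ _ _).symm
  -- Jordan identity for mul
  have hJordan : ∀ a z, mul a (mul (mul a a) z) = mul (mul a a) (mul a z) := by
    intro a z
    have e1 : mul a a = (-(1/2) : ℝ) • B y a a := hmB a a
    have e2 : mul (mul a a) z = ((1/4 : ℝ)) • B y (B y a a) z := by
      rw [e1, hmB, hBsm0, smul_smul]; norm_num
    have e3 : mul a (mul (mul a a) z) = ((-(1/8) : ℝ)) • B y a (B y (B y a a) z) := by
      rw [e2, hmB, hBsm1, smul_smul]; norm_num
    have e4 : mul a z = (-(1/2) : ℝ) • B y a z := hmB a z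
    have e5 : mul (mul a a) (mul a z) = ((-(1/8) : ℝ)) • B y (B y a a) (B y a z) := by
      rw [e1, e4, hmB, hBsm0, hBsm1, smul_smul, smul_smul]; norm_num
    rw [e3, e5, hBJordan]
  exact ⟨hcomm, hadd, hsmul, hJordan, S2w, htrace, ndg⟩
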